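/- arXiv:1509.02143 — 3 statements merged into one kernel-verified Lean document; each statement's English description precedes it below -/
import Mathlib

section
/- Let G be a totally ordered graph and let k and r be integers with 1 ≤ k < r. Then every monotone path in G of length k and height r can be extended (by appending one vertex at its final endpoint) to a monotone path of length k+1 whose height is at least r − k. -/
open scoped Classical

namespace AltitudePaper

variable {V : Type*} [Fintype V]

/-- The list of cells `(i, u)` (row `i`, column `u`), rows `1..N`, in the order
they are filled: by row, then by the vertex (column) order. -/
noncomputable def cellList (ov : LinearOrder V) (N : ℕ) : List (ℕ × V) :=
  letI := ov
  (List.range N).flatMap fun i => ((Finset.univ : Finset V).sort (· ≤ ·)).map fun u => (i + 1, u)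

/-- The largest (in the edge order `oe`) edge of `G` incident to `u` not among `used`. -/
noncomputable def pick (G : SimpleGraph V) (oe : LinearOrder (Sym2 V)) (u : V)
    (used : Finset (Sym2 V)) : Option (Sym2 V) :=
  letI := oe
  ((Finset.univ : Finset (Sym2 V)).filter fun e => e ∈ G.edgeSet ∧ u ∈ e ∧ e ∉ used).max

/-- Fill the given list of cells in order, greedily placing at each cell `(i,u)` the
largest unused edge incident to `u`. -/
noncomputable def tableAux (G : SimpleGraph V) (oe : LinearOrder (Sym2 V)) :
    List (ℕ × V) → Finset (Sym2 V) → (ℕ × V) → Option (Sym2 V)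
  | [], _, _ => none
  | c :: rest, used, β =>
    match pick G oe c.2 used with
    | none => if β = c then none else tableAux G oe rest used β
    | some e => if β = c then some e else tableAux G oe rest (insert e used) β

/-- The height table of the totally ordered graph `(G, ov, oe)`:  cells `(i,u)` with
`i` a positive integer (row) and `u` a vertex (column) are filled in order (by row,
then by column order), each cell receiving the largest edge incident to its column
not appearing in an earlier cell (and left empty if there is none). -/
noncomputable def heightTable (G : SimpleGraph V) (ov : LinearOrder V)
    (oe : LinearOrder (Sym2 V)) : ℕ × V → Option (Sym2 V) :=
  tableAux G oe (cellList ov (Fintype.card (Sym2 V))) ∅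

/-- The height `h_G(e)` of an edge `e`: the index of the row of the height table
containing `e`. -/
noncomputable def edgeHeight (G : SimpleGraph V) (ov : LinearOrder V)
    (oe : LinearOrder (Sym2 V)) (e : Sym2 V) : ℕ :=
  sSup {i | ∃ u, heightTable G ov oe (i, u) = some e}

/-- A monotone path in the edge-ordered graph `(G, oe)`: a path traversing its
edges in increasing order of the edge ordering. -/
def IsMonotonePath (G : SimpleGraph V) (oe : LinearOrder (Sym2 V)) {u v : V}
    (p : G.Walk u v) : Prop :=
  p.IsPath ∧ List.Chain' (fun e f => oe.lt e f) p.edges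

/-- The height of a (nontrivial) monotone path: the height of its last edge. -/
noncomputable def pathHeight (G : SimpleGraph V) (ov : LinearOrder V)
    (oe : LinearOrder (Sym2 V)) {u v : V} (p : G.Walk u v) : ℕ :=
  (p.edges.getLast?.map (edgeHeight G ov oe)).getD 0


/-!
If `i < h(e)` and `y ∈ e`, the cell `(i, y)` is filled while `e` is still an unused edge at `y`,
so it receives an edge at `y` larger than `e`, of height `i`. For the last edge `e = wy` of the
path, of height `r`, the rows `r - k, …, r - 1` thus give `k` distinct edges `yz` above `e`. None
of them is `wy` itself, and the path has only `k - 1` vertices besides `y` and `w`, so some `z`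
lies off the path; appending `yz` gives a monotone path of height at least `r - k`.
-/

section HeightTable

variable {G : SimpleGraph V} {oe : LinearOrder (Sym2 V)}

lemma pick_eq_some_spec {u : V} {used : Finset (Sym2 V)} {f : Sym2 V}
    (h : pick G oe u used = some f) : f ∈ G.edgeSet ∧ u ∈ f ∧ f ∉ used := by
  simpa using Finset.mem_of_max h

lemma exists_pick_eq_some_ge {u : V} {used : Finset (Sym2 V)} {e : Sym2 V}
    (he : e ∈ G.edgeSet) (hue : u ∈ e) (hused : e ∉ used) :
    ∃ f, pick G oe u used = some f ∧ oe.le e f := by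
  let := oe
  have hmem : e ∈ (Finset.univ : Finset (Sym2 V)).filter
      (fun e => e ∈ G.edgeSet ∧ u ∈ e ∧ e ∉ used) := by
    simp [he, hue, hused]
  obtain ⟨f, hf⟩ := Finset.max_of_mem hmem
  exact ⟨f, hf, Finset.le_max_of_eq hmem hf⟩

variable (G oe) in
lemma tableAux_cons (c : ℕ × V) (rest : List (ℕ × V)) (used : Finset (Sym2 V)) (β : ℕ × V) :
    tableAux G oe (c :: rest) used β =
      if β = c then pick G oe c.2 used
      else tableAux G oe rest (used ∪ (pick G oe c.2 used).toFinset) β := by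
  cases h : pick G oe c.2 used <;> by_cases hβ : β = c <;>
    simp [tableAux, h, hβ, Finset.union_singleton]

lemma tableAux_eq_some_spec {l : List (ℕ × V)} {used : Finset (Sym2 V)} {β : ℕ × V}
    {e : Sym2 V} (h : tableAux G oe l used β = some e) :
    e ∈ G.edgeSet ∧ β.2 ∈ e ∧ β ∈ l ∧ e ∉ used := by
  induction l generalizing used with
  | nil => simp [tableAux] at h
  | cons c rest ih =>
    rw [tableAux_cons] at h
    split_ifs at h with hβ
    · subst hβ
      obtain ⟨he, hβe, hused⟩ := pick_eq_some_spec h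
      exact ⟨he, hβe, List.mem_cons_self, hused⟩
    · obtain ⟨he, hβe, hβl, hused⟩ := ih h
      exact ⟨he, hβe, List.mem_cons_of_mem _ hβl, fun h => hused (Finset.mem_union_left _ h)⟩

lemma eq_of_tableAux_eq_some {l : List (ℕ × V)} {used : Finset (Sym2 V)} {β β' : ℕ × V}
    {e : Sym2 V} (h : tableAux G oe l used β = some e)
    (h' : tableAux G oe l used β' = some e) : β = β' := by
  induction l generalizing used with
  | nil => simp [tableAux] at h
  | cons c rest ih =>
    rw [tableAux_cons] at h h'
    split_ifs at h h' with hβ hβ'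
    · rw [hβ, hβ']
    · rw [h] at h'
      exact absurd (by simp) (tableAux_eq_some_spec h').2.2.2
    · rw [h'] at h
      exact absurd (by simp) (tableAux_eq_some_spec h).2.2.2
    · exact ih h h'

lemma exists_tableAux_eq_some_gt {l : List (ℕ × V)} {used : Finset (Sym2 V)} {β β' : ℕ × V}
    {e : Sym2 V} (hl : l.Pairwise fun a b => a.1 ≤ b.1)
    (h' : tableAux G oe l used β' = some e) (hβ : β ∈ l) (hlt : β.1 < β'.1) (hβe : β.2 ∈ e) :
    ∃ f, tableAux G oe l used β = some f ∧ oe.lt e f := by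
  induction l generalizing used with
  | nil => simp at hβ
  | cons c rest ih =>
    have hcβ : c.1 ≤ β.1 := by
      rcases List.mem_cons.mp hβ with rfl | hβ
      · exact le_rfl
      · exact List.rel_of_pairwise_cons hl hβ
    have hβ'c : β' ≠ c := by
      rintro rfl
      omega
    rw [tableAux_cons, if_neg hβ'c] at h'
    rw [tableAux_cons]
    by_cases hβc : β = c
    · subst hβc
      rw [if_pos rfl]
      obtain ⟨he, -, -, hused⟩ := tableAux_eq_some_spec h'
      obtain ⟨f, hf, hef⟩ :=
        exists_pick_eq_some_ge he hβe fun h => hused (Finset.mem_union_left _ h)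
      refine ⟨f, hf, @lt_of_le_of_ne _ oe.toPartialOrder _ _ hef ?_⟩
      rintro rfl
      simp [hf] at hused
    · rw [if_neg hβc]
      exact ih (List.pairwise_cons.mp hl).2 h' ((List.mem_cons.mp hβ).resolve_left hβc)

lemma cellList_pairwise (ov : LinearOrder V) (N : ℕ) :
    (cellList ov N).Pairwise fun a b => a.1 ≤ b.1 := by
  simp only [cellList, List.pairwise_flatMap, List.pairwise_map, le_refl]
  refine ⟨fun _ _ => List.pairwise_of_forall fun _ _ => trivial, List.pairwise_lt_range.imp ?_⟩
  grind

lemma mem_cellList {ov : LinearOrder V} {N i : ℕ} {u : V} :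
    (i, u) ∈ cellList ov N ↔ 1 ≤ i ∧ i ≤ N := by
  simp only [cellList, List.mem_flatMap, List.mem_range, List.mem_map, Finset.mem_sort,
    Finset.mem_univ, Prod.mk.injEq, true_and, exists_eq_right]
  exact ⟨fun ⟨a, ha, h⟩ => by omega, fun h => ⟨i - 1, by omega⟩⟩

variable (ov : LinearOrder V)

lemma edgeHeight_eq_of_heightTable_eq_some {i : ℕ} {u : V} {e : Sym2 V}
    (h : heightTable G ov oe (i, u) = some e) : edgeHeight G ov oe e = i := by
  have hrows : {j | ∃ v, heightTable G ov oe (j, v) = some e} = {i} := by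
    ext j
    refine ⟨fun ⟨v, hv⟩ => congrArg Prod.fst (eq_of_tableAux_eq_some hv h), ?_⟩
    rintro rfl
    exact ⟨u, h⟩
  rw [edgeHeight, hrows, csSup_singleton]

lemma exists_heightTable_eq_some_of_edgeHeight_pos {e : Sym2 V}
    (h : 0 < edgeHeight G ov oe e) : ∃ u, heightTable G ov oe (edgeHeight G ov oe e, u) = some e := by
  have hbdd : BddAbove {j | ∃ v, heightTable G ov oe (j, v) = some e} := by
    refine ⟨Fintype.card (Sym2 V), ?_⟩
    rintro j ⟨v, hv⟩
    exact (mem_cellList.mp (tableAux_eq_some_spec hv).2.2.1).2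
  have hne : {j | ∃ v, heightTable G ov oe (j, v) = some e}.Nonempty := by
    by_contra hempty
    rw [Set.not_nonempty_iff_eq_empty] at hempty
    simp [edgeHeight, hempty] at h
  exact Nat.sSup_mem hne hbdd

theorem exists_adj_of_lt_edgeHeight {e : Sym2 V} {y : V} (hye : y ∈ e) {i : ℕ} (hi : 1 ≤ i)
    (hie : i < edgeHeight G ov oe e) :
    ∃ z, G.Adj y z ∧ oe.lt e s(y, z) ∧ edgeHeight G ov oe s(y, z) = i := by
  obtain ⟨u, hu⟩ :=
    exists_heightTable_eq_some_of_edgeHeight_pos (G := G) (oe := oe) (e := e) ov (by omega)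
  have hbound := (mem_cellList.mp (tableAux_eq_some_spec hu).2.2.1).2
  obtain ⟨f, hf, hef⟩ := exists_tableAux_eq_some_gt (β := (i, y)) (cellList_pairwise ov _) hu
    (mem_cellList.mpr ⟨hi, by omega⟩) hie hye
  obtain ⟨hfG, hyf, -⟩ := tableAux_eq_some_spec hf
  obtain ⟨z, rfl⟩ := Sym2.mem_iff_exists.mp hyf
  exact ⟨z, hfG, hef, edgeHeight_eq_of_heightTable_eq_some ov hf⟩

end HeightTable

omit [Fintype V] in
lemma exists_apply_notMem_of_card_le {ι : Type*} {T : Finset V} {s : Finset ι} {z : ι → V}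
    (hz : Set.InjOn z s) {y w : V} (hy : y ∈ T) (hw : w ∈ T) (hyw : y ≠ w)
    (hzy : ∀ i ∈ s, z i ≠ y) (hzw : ∀ i ∈ s, z i ≠ w) (hT : T.card ≤ s.card + 1) :
    ∃ i ∈ s, z i ∉ T := by
  by_contra! hzT
  have hsub : insert y (insert w (s.image z)) ⊆ T := by
    simp only [Finset.insert_subset_iff, Finset.image_subset_iff]
    exact ⟨hy, hw, hzT⟩
  have hcard : (insert y (insert w (s.image z))).card = s.card + 2 := by
    rw [Finset.card_insert_of_notMem, Finset.card_insert_of_notMem,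
      Finset.card_image_of_injOn hz]
    · simpa using hzw
    · simpa [hyw] using hzy
  have := Finset.card_le_card hsub
  omega

section Walk

open SimpleGraph Walk

variable {G : SimpleGraph V} {x y z : V}

lemma not_nil_of_pathHeight_ne_zero {ov : LinearOrder V} {oe : LinearOrder (Sym2 V)}
    {p : G.Walk x y} (hp : pathHeight G ov oe p ≠ 0) : ¬p.Nil := fun h => by
  simp [pathHeight, edges_eq_nil.mpr h] at hp

omit [Fintype V] in
lemma getLast?_edges_eq_of_not_nil {p : G.Walk x y} (hp : ¬p.Nil) :
    p.edges.getLast? = some s(p.penultimate, y) := by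
  rw [List.getLast?_eq_some_getLast (edges_eq_nil.not.mpr hp), getLast_edges_eq_mk_penultimate_end]

omit [Fintype V] in
lemma exists_adj_notMem_support_of_injOn {p : G.Walk x y} (hp : p.IsPath) (hnil : ¬p.Nil)
    {ι : Type*} {s : Finset ι} (hs : p.length ≤ s.card) {z : ι → V} (hinj : Set.InjOn z s)
    (hadj : ∀ i ∈ s, G.Adj y (z i)) (hzw : ∀ i ∈ s, z i ≠ p.penultimate) :
    ∃ i ∈ s, z i ∉ p.support := by
  obtain ⟨i, hi, hzi⟩ := exists_apply_notMem_of_card_le (T := p.support.toFinset) hinj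
    (List.mem_toFinset.mpr p.end_mem_support) (List.mem_toFinset.mpr (p.getVert_mem_support _))
    (adj_penultimate hnil).ne' (fun i hi => (hadj i hi).ne') hzw
    (by rw [List.toFinset_card_of_nodup hp.support_nodup, length_support]; omega)
  exact ⟨i, hi, by simpa using hzi⟩

lemma pathHeight_concat (ov : LinearOrder V) (oe : LinearOrder (Sym2 V)) (p : G.Walk x y)
    (h : G.Adj y z) : pathHeight G ov oe (p.concat h) = edgeHeight G ov oe s(y, z) := by
  simp [pathHeight, edges_concat]

omit [Fintype V] in
lemma IsMonotonePath.concat {oe : LinearOrder (Sym2 V)} {p : G.Walk x y}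
    (hp : IsMonotonePath G oe p) (hz : z ∉ p.support) (h : G.Adj y z)
    (hlast : ∀ e ∈ p.edges.getLast?, oe.lt e s(y, z)) : IsMonotonePath G oe (p.concat h) := by
  refine ⟨hp.1.concat hz h, ?_⟩
  rw [edges_concat, List.concat_eq_append]
  exact hp.2.append (List.isChain_singleton _) (by simpa using hlast)

end Walk

theorem monotone_path_extension_general {V : Type*} [Fintype V] (G : SimpleGraph V)
    (ov : LinearOrder V) (oe : LinearOrder (Sym2 V)) {x y : V} (p : G.Walk x y)
    (k r : ℕ) (hkr : k < r)
    (hmono : IsMonotonePath G oe p) (hlen : p.length = k)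
    (hht : pathHeight G ov oe p = r) :
    ∃ (z : V) (h : G.Adj y z),
      IsMonotonePath G oe (p.concat h) ∧ (p.concat h).length = k + 1 ∧
        r - k ≤ pathHeight G ov oe (p.concat h) := by
  have hnil := not_nil_of_pathHeight_ne_zero (hht ▸ (by omega : r ≠ 0))
  set w := p.penultimate
  have hlast := getLast?_edges_eq_of_not_nil hnil
  have hr : edgeHeight G ov oe s(w, y) = r := by simpa [pathHeight, hlast] using hht
  have hrows : ∀ i ∈ Finset.Icc (r - k) (r - 1),
      ∃ z, G.Adj y z ∧ oe.lt s(w, y) s(y, z) ∧ edgeHeight G ov oe s(y, z) = i := by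
    intro i hi
    rw [Finset.mem_Icc] at hi
    exact exists_adj_of_lt_edgeHeight ov (Sym2.mem_mk_right w y) (by omega) (by omega)
  have : Nonempty V := ⟨y⟩
  choose! z hadj hgt hheight using hrows
  have hinj : Set.InjOn z (Finset.Icc (r - k) (r - 1)) := fun i hi j hj hij => by
    rw [← hheight i hi, ← hheight j hj, hij]
  have hzw : ∀ i ∈ Finset.Icc (r - k) (r - 1), z i ≠ w := fun i hi hzi => by
    have := hgt i hi
    rw [hzi, Sym2.eq_swap] at this
    exact @lt_irrefl _ oe.toPreorder _ this
  obtain ⟨i, hi, hzi⟩ := exists_adj_notMem_support_of_injOn hmono.1 hnil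
    (by rw [hlen, Nat.card_Icc]; omega) hinj hadj hzw
  refine ⟨z i, hadj i hi, hmono.concat hzi (hadj i hi) (by simpa [hlast] using hgt i hi),
    by simp [hlen], ?_⟩
  rw [pathHeight_concat, hheight i hi]
  exact (Finset.mem_Icc.mp hi).1

/-- Lemma 1 of the paper.  In a totally ordered graph `(G, ov, oe)`,
for `1 ≤ k < r`, each monotone path of length `k` and height `r` extends (by appending
one vertex at its final endpoint) to a monotone path of length `k + 1` and height at
least `r - k`. -/
theorem monotone_path_extension {V : Type*} [Fintype V] (G : SimpleGraph V)
    (ov : LinearOrder V) (oe : LinearOrder (Sym2 V)) {x y : V} (p : G.Walk x y)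
    (k r : ℕ) (hk : 1 ≤ k) (hkr : k < r)
    (hmono : IsMonotonePath G oe p) (hlen : p.length = k)
    (hht : pathHeight G ov oe p = r) :
    ∃ (z : V) (h : G.Adj y z),
      IsMonotonePath G oe (p.concat h) ∧ (p.concat h).length = k + 1 ∧
        r - k ≤ pathHeight G ov oe (p.concat h) :=
  monotone_path_extension_general G ov oe p k r hkr hmono hlen hht

end AltitudePaper
end

section
/- In any token game with m tokens and at most 2^ℓ transfer steps (ℓ ≥ 0), every column gains a net of at most 1 + 2ℓ⌈√(2m)⌉ tokens; that is, if a column contains a tokens in the first array of the transcript and b tokens in the last array, then b − a ≤ 1 + 2ℓ⌈√(2m)⌉. -/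
/-!
Induction on `ℓ` with `q = ⌈√(2m)⌉`, so that `2m ≤ q²`: if every stretch of the play with at
most `N` transfer steps raises each column by at most `B` tokens, then every stretch with at most
`2N` transfer steps raises each column by at most `B + 2q`. Split such a stretch into two halves
with at most `N` transfers each. Shifting never raises a token, so the number of tokens of a
column `c` in rows `≥ B + q` grows only through transfers into `c` landing in those rows. The
source of such a transfer holds more than `B + q` tokens when it moves, hence more than `q` tokens
at the start of its half. No two transfers into `c` share a source, and at any time at most
`m / (q + 1)` columns hold more than `q` tokens, so there are at most `2m / (q + 1) ≤ q` such
transfers, and `c` gains at most `(B + q) + q` tokens.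
-/
namespace AltitudePaper

open Finset

/-- The contents of one column after its ungrounded tokens each shift down one cell.
A column is a set of occupied rows; its grounded tokens are the initial segment
`[0, sInf Tᶜ)`, which stay put, and every ungrounded token moves down one row. -/
def shiftDown (T : Set ℕ) : Set ℕ :=
  {i | i ∈ T ∧ i < sInf Tᶜ} ∪ {i | sInf Tᶜ ≤ i ∧ i + 1 ∈ T}

/-- A token game (together with a play of it).  `board t` is the array `B_t` (for
`0 ≤ t ≤ len`): each column (indexed by `Fin n`) is the set of rows occupied by
tokens.  `active t` is the active column at step `t`, advancing cyclically.  `move t`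
records the player's optional move at step `t`: `some (v, i, i')` means the highest
grounded token of the active column, in row `i`, is moved to the empty cell in
row `i' ≤ i` of column `v` (allowed only if no earlier step moved a token between
these two columns); afterwards the ungrounded tokens of the active column shift down
one cell. -/
structure TokenGame (n : ℕ) where
  /-- number of steps -/
  len : ℕ
  /-- the array after `t` steps: each column is the set of rows occupied by tokens -/
  board : ℕ → Fin n → Set ℕ
  /-- the active column at each step -/
  active : ℕ → Fin n
  /-- the optional move at each step: target column, source row, target row -/
  move : ℕ → Option (Fin n × ℕ × ℕ)
  /-- the active column advances cyclically -/
  active_succ : ∀ t, (active (t + 1)).val = ((active t).val + 1) % n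
  /-- a step with no token moved: the ungrounded tokens of the active column shift
  down one cell -/
  step_none : ∀ t < len, move t = none →
    ∀ w, board (t + 1) w =
      if w = active t then shiftDown (board t (active t)) else board t w
  /-- a step moving a token: the token moved is the highest grounded token of the
  active column, it moves to an empty cell in a weakly lower row of another column,
  no earlier step moved a token between these two columns, and then the ungrounded
  tokens of the active column shift down one cell -/
  step_some : ∀ t < len, ∀ v i i', move t = some (v, i, i') →
    v ≠ active t ∧
    (∀ j ≤ i, j ∈ board t (active t)) ∧ i + 1 ∉ board t (active t) ∧
    i' ≤ i ∧ i' ∉ board t v ∧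
    (∀ t' < t, ∀ v' i₀ i₀', move t' = some (v', i₀, i₀') →
      ¬((active t' = active t ∧ v' = v) ∨ (active t' = v ∧ v' = active t))) ∧
    (∀ w, board (t + 1) w =
      if w = active t then shiftDown (board t (active t) \ {i})
      else if w = v then insert i' (board t v) else board t w)

/-- The number of transfer steps (steps moving a token between two columns) of a
token game. -/
def transferCount {n : ℕ} (g : TokenGame n) : ℕ :=
  ((Finset.range g.len).filter fun t => (g.move t).isSome).card

/-- The number of transfer steps among steps `t₁ ≤ t < t₂` of a token game;
these are the transfer steps of the subgame with transcript `B_{t₁}, …, B_{t₂}`. -/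
def transferCountBetween {n : ℕ} (g : TokenGame n) (t₁ t₂ : ℕ) : ℕ :=
  ((Finset.Ico t₁ t₂).filter fun t => (g.move t).isSome).card

/-- `ĝ(n, s)`: the maximum number of tokens that can be placed in a single column in
an `(n,s)`-token game (a token game with `n` columns, each initially containing at
most `s` tokens). -/
noncomputable def ghat (n s : ℕ) : ℕ :=
  sSup {k | ∃ g : TokenGame n, (∀ u, (g.board 0 u).Finite) ∧
    (∀ u, (g.board 0 u).ncard ≤ s) ∧ ∃ t ≤ g.len, ∃ u, k = (g.board t u).ncard}

def skipAt (s i : ℕ) : ℕ := if i < s then i else i + 1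

lemma skipAt_injective (s : ℕ) : Function.Injective (skipAt s) := by
  intro a b h
  unfold skipAt at h
  split_ifs at h <;> omega

lemma le_skipAt (s i : ℕ) : i ≤ skipAt s i := by
  unfold skipAt
  split_ifs <;> omega

lemma range_skipAt (s : ℕ) : Set.range (skipAt s) = {s}ᶜ := by
  ext x
  simp only [Set.mem_range, Set.mem_compl_singleton_iff, skipAt]
  constructor
  · rintro ⟨i, rfl⟩
    split_ifs <;> omega
  · intro hx
    rcases lt_or_gt_of_ne hx with h | h
    · exact ⟨x, if_pos h⟩
    · exact ⟨x - 1, by rw [if_neg (by omega)]; omega⟩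

lemma shiftDown_eq_preimage (T : Set ℕ) : shiftDown T = skipAt (sInf Tᶜ) ⁻¹' T := by
  ext i
  simp only [shiftDown, skipAt, Set.mem_union, Set.mem_ofPred_eq, Set.mem_preimage]
  split_ifs with h
  · simp [h, not_le.2 h]
  · simp [h, not_lt.1 h]

lemma shiftDown_finite {T : Set ℕ} (hT : T.Finite) : (shiftDown T).Finite := by
  rw [shiftDown_eq_preimage]
  exact hT.preimage (skipAt_injective _).injOn

lemma ncard_shiftDown {T : Set ℕ} (hT : T.Finite) : (shiftDown T).ncard = T.ncard := by
  have hs : sInf Tᶜ ∉ T := Nat.sInf_mem hT.infinite_compl.nonempty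
  rw [shiftDown_eq_preimage]
  refine Set.ncard_preimage_of_injective_subset_range (skipAt_injective _) ?_
  rw [range_skipAt]
  exact fun x hx (h : x = _) => hs (h ▸ hx)

lemma ncard_shiftDown_inter_Ici_le {T : Set ℕ} (hT : T.Finite) (R : ℕ) :
    (shiftDown T ∩ Set.Ici R).ncard ≤ (T ∩ Set.Ici R).ncard := by
  rw [shiftDown_eq_preimage]
  refine Set.ncard_le_ncard_of_injOn (skipAt (sInf Tᶜ)) ?_ (skipAt_injective _).injOn
    (hT.inter_of_left _)
  exact fun i ⟨hiT, hiR⟩ => ⟨hiT, le_trans hiR (le_skipAt _ i)⟩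

lemma ncard_insert_inter_Ici_le (T : Set ℕ) (a R : ℕ) :
    (insert a T ∩ Set.Ici R).ncard ≤ (T ∩ Set.Ici R).ncard + if R ≤ a then 1 else 0 := by
  split_ifs with h
  · rw [Set.insert_inter_of_mem (Set.mem_Ici.2 h)]
    exact Set.ncard_insert_le _ _
  · rw [Set.insert_inter_of_notMem (mt Set.mem_Ici.1 h)]
    exact le_rfl

lemma ncard_le_add_ncard_inter_Ici {T : Set ℕ} (hT : T.Finite) (R : ℕ) :
    T.ncard ≤ R + (T ∩ Set.Ici R).ncard := by
  rw [← Set.ncard_inter_add_ncard_sdiff_eq_ncard T (Set.Ici R) hT, add_comm]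
  gcongr
  calc (T \ Set.Ici R).ncard ≤ (Set.Iio R).ncard :=
        Set.ncard_le_ncard (fun i ⟨_, hi⟩ => Set.mem_Iio.2 (not_le.1 hi)) (Set.finite_Iio R)
    _ = R := Set.ncard_Iio_nat R

namespace TokenGame

variable {n : ℕ} (g : TokenGame n)

lemma board_finite (hfin : ∀ u, (g.board 0 u).Finite) {t : ℕ} (ht : t ≤ g.len) (u : Fin n) :
    (g.board t u).Finite := by
  induction t generalizing u with
  | zero => exact hfin u
  | succ t ih =>
    have ih := ih (by omega)
    cases hmv : g.move t with
    | none =>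
      rw [g.step_none t ht hmv u]
      split_ifs
      exacts [shiftDown_finite (ih _), ih u]
    | some p =>
      obtain ⟨v, i, i'⟩ := p
      obtain ⟨-, -, -, -, -, -, hboard⟩ := g.step_some t ht v i i' hmv
      rw [hboard u]
      split_ifs
      exacts [shiftDown_finite (ih _).sdiff, (ih v).insert _, ih u]

lemma ncard_board_succ_of_move_eq_none {t : ℕ} (hfin : ∀ u, (g.board t u).Finite)
    (ht : t < g.len) (hmv : g.move t = none) (u : Fin n) :
    (g.board (t + 1) u).ncard = (g.board t u).ncard := by
  rw [g.step_none t ht hmv u]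
  split_ifs with h
  · rw [h, ncard_shiftDown (hfin _)]
  · rfl

lemma ncard_board_succ_add_of_move_eq_some {t : ℕ} (hfin : ∀ u, (g.board t u).Finite)
    (ht : t < g.len) {v : Fin n} {i i' : ℕ} (hmv : g.move t = some (v, i, i')) (u : Fin n) :
    (g.board (t + 1) u).ncard + (if u = g.active t then 1 else 0) =
      (g.board t u).ncard + if u = v then 1 else 0 := by
  obtain ⟨hv, hground, -, -, hi', -, hboard⟩ := g.step_some t ht v i i' hmv
  rw [hboard u]
  by_cases hu : u = g.active t
  · subst hu
    rw [if_pos rfl, if_pos rfl, if_neg hv.symm, ncard_shiftDown (hfin _).sdiff,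
      Set.ncard_sdiff_singleton_add_one (hground i le_rfl) (hfin _), add_zero]
  · rw [if_neg hu, if_neg hu]
    split_ifs with huv
    · subst huv
      exact Set.ncard_insert_of_notMem hi' (hfin _)
    · rfl

lemma ncard_board_succ_le {t : ℕ} (hfin : ∀ u, (g.board t u).Finite) (ht : t < g.len)
    (u : Fin n) :
    (g.board (t + 1) u).ncard ≤ (g.board t u).ncard + if (g.move t).isSome then 1 else 0 := by
  cases hmv : g.move t with
  | none => simp [g.ncard_board_succ_of_move_eq_none hfin ht hmv]
  | some p =>
    have := g.ncard_board_succ_add_of_move_eq_some hfin ht hmv u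
    simp only [Option.isSome_some, if_true]
    split_ifs at this <;> omega

lemma sum_ncard_board (hfin : ∀ u, (g.board 0 u).Finite) {t : ℕ} (ht : t ≤ g.len) :
    ∑ u, (g.board t u).ncard = ∑ u, (g.board 0 u).ncard := by
  induction t with
  | zero => rfl
  | succ t ih =>
    rw [← ih (by omega)]
    have hfin' := g.board_finite hfin (t := t) (by omega)
    cases hmv : g.move t with
    | none => simp only [g.ncard_board_succ_of_move_eq_none hfin' ht hmv]
    | some p =>
      have := Finset.sum_congr rfl fun u (_ : u ∈ Finset.univ) =>
        g.ncard_board_succ_add_of_move_eq_some hfin' ht hmv u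
      simpa [Finset.sum_add_distrib] using this

lemma card_filter_le_ncard_board_mul_le (hfin : ∀ u, (g.board 0 u).Finite) {t : ℕ}
    (ht : t ≤ g.len) (q : ℕ) :
    #{u | q ≤ (g.board t u).ncard} * q ≤ ∑ u, (g.board 0 u).ncard := by
  rw [← g.sum_ncard_board hfin ht, ← smul_eq_mul]
  exact (Finset.card_nsmul_le_sum _ _ _ fun u hu => (Finset.mem_filter.1 hu).2).trans
    (Finset.sum_le_sum_of_subset (Finset.filter_subset _ _))

lemma transferCountBetween_self (t : ℕ) : transferCountBetween g t t = 0 := by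
  simp [transferCountBetween]

lemma transferCountBetween_succ {t₁ t : ℕ} (h : t₁ ≤ t) :
    transferCountBetween g t₁ (t + 1) =
      transferCountBetween g t₁ t + if (g.move t).isSome then 1 else 0 := by
  unfold transferCountBetween
  rw [Nat.Ico_succ_right_eq_insert_Ico h, filter_insert]
  split_ifs
  · exact card_insert_of_notMem (by simp)
  · rfl

lemma transferCountBetween_add {t₁ t₂ t₃ : ℕ} (h₁₂ : t₁ ≤ t₂) (h₂₃ : t₂ ≤ t₃) :
    transferCountBetween g t₁ t₂ + transferCountBetween g t₂ t₃ =
      transferCountBetween g t₁ t₃ := by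
  unfold transferCountBetween
  rw [← card_union_of_disjoint
      (disjoint_filter_filter (Ico_disjoint_Ico_consecutive t₁ t₂ t₃)),
    ← filter_union, Ico_union_Ico_eq_Ico h₁₂ h₂₃]

lemma transferCountBetween_mono {t₁ t₂ t₁' t₂' : ℕ} (h₁ : t₁' ≤ t₁) (h₂ : t₂ ≤ t₂') :
    transferCountBetween g t₁ t₂ ≤ transferCountBetween g t₁' t₂' :=
  card_le_card (filter_subset_filter _ (Ico_subset_Ico h₁ h₂))

lemma exists_transferCountBetween_le_of_le_add {t₁ t₂ N : ℕ} (h₁₂ : t₁ ≤ t₂)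
    (h : transferCountBetween g t₁ t₂ ≤ N + N) :
    ∃ s, t₁ ≤ s ∧ s ≤ t₂ ∧
      transferCountBetween g t₁ s ≤ N ∧ transferCountBetween g s t₂ ≤ N := by
  have hP : transferCountBetween g t₁ t₁ ≤ N := by simp [transferCountBetween_self]
  set s := Nat.findGreatest (fun t => transferCountBetween g t₁ t ≤ N) t₂
  have h₁s : t₁ ≤ s := Nat.le_findGreatest h₁₂ hP
  have hs₂ : s ≤ t₂ := Nat.findGreatest_le t₂
  have hs : transferCountBetween g t₁ s ≤ N :=
    Nat.findGreatest_spec (P := fun t => transferCountBetween g t₁ t ≤ N) h₁₂ hP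
  refine ⟨s, h₁s, hs₂, hs, ?_⟩
  rcases hs₂.eq_or_lt with heq | hlt
  · simp [heq, transferCountBetween_self]
  · have hnext : N < transferCountBetween g t₁ (s + 1) :=
      not_le.1 (Nat.findGreatest_is_greatest
        (P := fun t => transferCountBetween g t₁ t ≤ N) (Nat.lt_succ_self s) hlt)
    have hsplit := g.transferCountBetween_add h₁s hlt.le
    rw [g.transferCountBetween_succ h₁s] at hnext
    split_ifs at hnext <;> omega

lemma ncard_board_le_add_transferCountBetween (hfin : ∀ u, (g.board 0 u).Finite)
    {t₁ t₂ : ℕ} (h₁₂ : t₁ ≤ t₂) (h₂ : t₂ ≤ g.len) (u : Fin n) :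
    (g.board t₂ u).ncard ≤ (g.board t₁ u).ncard + transferCountBetween g t₁ t₂ := by
  induction t₂, h₁₂ using Nat.le_induction with
  | base => simp [transferCountBetween_self]
  | succ t h₁ ih =>
    have hstep := g.ncard_board_succ_le (g.board_finite hfin (by omega)) h₂ u
    have := ih (by omega)
    rw [g.transferCountBetween_succ h₁]
    omega

open Classical in
noncomputable def insertionStepsAbove (c : Fin n) (R t₁ t₂ : ℕ) : Finset ℕ :=
  {t ∈ Ico t₁ t₂ | ∃ i i', g.move t = some (c, i, i') ∧ R ≤ i'}

open Classical in
lemma ncard_board_succ_inter_Ici_le {t : ℕ} (hfin : ∀ u, (g.board t u).Finite)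
    (ht : t < g.len) (c : Fin n) (R : ℕ) :
    (g.board (t + 1) c ∩ Set.Ici R).ncard ≤ (g.board t c ∩ Set.Ici R).ncard +
      if ∃ i i', g.move t = some (c, i, i') ∧ R ≤ i' then 1 else 0 := by
  cases hmv : g.move t with
  | none =>
    simp only [reduceCtorEq, false_and, exists_const, if_false, add_zero]
    rw [g.step_none t ht hmv c]
    split_ifs with hc
    · exact hc ▸ ncard_shiftDown_inter_Ici_le (hfin _) R
    · exact le_rfl
  | some p =>
    obtain ⟨v, i, i'⟩ := p
    have hcond : (∃ j j', some (v, i, i') = some (c, j, j') ∧ R ≤ j') ↔ c = v ∧ R ≤ i' := by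
      aesop
    simp only [hcond]
    obtain ⟨-, -, -, -, -, -, hboard⟩ := g.step_some t ht v i i' hmv
    rw [hboard c]
    by_cases hc : c = g.active t
    · rw [if_pos hc]
      subst hc
      calc _ ≤ ((g.board t (g.active t) \ {i}) ∩ Set.Ici R).ncard :=
            ncard_shiftDown_inter_Ici_le (hfin _).sdiff R
        _ ≤ (g.board t (g.active t) ∩ Set.Ici R).ncard :=
            Set.ncard_le_ncard (Set.inter_subset_inter_left _ Set.sdiff_subset)
              ((hfin _).inter_of_left _)
        _ ≤ _ := Nat.le_add_right _ _
    · rw [if_neg hc]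
      by_cases hcv : c = v
      · subst hcv
        simpa using ncard_insert_inter_Ici_le (g.board t c) i' R
      · simp [hcv]

lemma ncard_board_inter_Ici_le (hfin : ∀ u, (g.board 0 u).Finite) {t₁ t₂ : ℕ}
    (h₁₂ : t₁ ≤ t₂) (h₂ : t₂ ≤ g.len) (c : Fin n) (R : ℕ) :
    (g.board t₂ c ∩ Set.Ici R).ncard ≤
      (g.board t₁ c ∩ Set.Ici R).ncard + #(g.insertionStepsAbove c R t₁ t₂) := by
  induction t₂, h₁₂ using Nat.le_induction with
  | base => simp [insertionStepsAbove]
  | succ t h₁ ih =>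
    have hstep := g.ncard_board_succ_inter_Ici_le (g.board_finite hfin (by omega)) h₂ c R
    have := ih (by omega)
    unfold insertionStepsAbove at this ⊢
    rw [Nat.Ico_succ_right_eq_insert_Ico h₁, filter_insert]
    split_ifs at hstep ⊢
    · rw [card_insert_of_notMem (by simp)]
      omega
    · omega

lemma active_ne_of_move_eq_some {t t' : ℕ} (htt' : t < t') (ht' : t' < g.len) {c : Fin n}
    {i i' j j' : ℕ} (hmv : g.move t = some (c, i, i')) (hmv' : g.move t' = some (c, j, j')) :
    g.active t ≠ g.active t' := by
  obtain ⟨-, -, -, -, -, hfresh, -⟩ := g.step_some t' ht' c j j' hmv'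
  exact fun h => hfresh t htt' c i i' hmv (Or.inl ⟨h, rfl⟩)

lemma injOn_active_of_move_eq_some (c : Fin n) :
    Set.InjOn g.active {t | t < g.len ∧ ∃ i i', g.move t = some (c, i, i')} := by
  rintro t ⟨ht, i, i', hmv⟩ t' ⟨ht', j, j', hmv'⟩ h
  by_contra hne
  rcases lt_or_gt_of_ne hne with hlt | hlt
  · exact g.active_ne_of_move_eq_some hlt ht' hmv hmv' h
  · exact g.active_ne_of_move_eq_some hlt ht hmv' hmv h.symm

lemma lt_ncard_board_active_of_move_eq_some {t : ℕ} (hfin : ∀ u, (g.board t u).Finite)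
    (ht : t < g.len) {v : Fin n} {i i' : ℕ} (hmv : g.move t = some (v, i, i')) :
    i' < (g.board t (g.active t)).ncard := by
  obtain ⟨-, hground, -, hi'i, -⟩ := g.step_some t ht v i i' hmv
  calc i' < (Set.Iic i).ncard := by rw [Set.ncard_Iic_nat]; omega
    _ ≤ _ := Set.ncard_le_ncard (fun j hj => hground j hj) (hfin _)

lemma card_mul_le_of_sources_tall (hfin : ∀ u, (g.board 0 u).Finite) {S : Finset ℕ} {c : Fin n}
    (hS : ∀ t ∈ S, t < g.len ∧ ∃ i i', g.move t = some (c, i, i')) {τ₁ τ₂ p : ℕ}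
    (hτ₁ : τ₁ ≤ g.len) (hτ₂ : τ₂ ≤ g.len)
    (htall : ∀ t ∈ S, p ≤ (g.board τ₁ (g.active t)).ncard ∨ p ≤ (g.board τ₂ (g.active t)).ncard) :
    #S * p ≤ 2 * ∑ u, (g.board 0 u).ncard := by
  have hS : #S ≤ #{u | p ≤ (g.board τ₁ u).ncard} + #{u | p ≤ (g.board τ₂ u).ncard} :=
    (card_le_card_of_injOn g.active (fun t ht => by simpa using htall t ht)
      ((g.injOn_active_of_move_eq_some c).mono fun t ht => hS t ht)).trans (card_union_le _ _)
  have h₁ := g.card_filter_le_ncard_board_mul_le hfin hτ₁ p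
  have h₂ := g.card_filter_le_ncard_board_mul_le hfin hτ₂ p
  nlinarith

def GainBounded (N B : ℕ) : Prop :=
  ∀ t₁ t₂, t₁ ≤ t₂ → t₂ ≤ g.len → transferCountBetween g t₁ t₂ ≤ N →
    ∀ u, (g.board t₂ u).ncard ≤ (g.board t₁ u).ncard + B

lemma gainBounded_one (hfin : ∀ u, (g.board 0 u).Finite) : g.GainBounded 1 1 :=
  fun _ _ h₁₂ h₂ htr u => (g.ncard_board_le_add_transferCountBetween hfin h₁₂ h₂ u).trans
    (Nat.add_le_add_left htr _)

lemma GainBounded.add_self {g : TokenGame n} (hfin : ∀ u, (g.board 0 u).Finite) {q N B : ℕ}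
    (hq : 2 * ∑ u, (g.board 0 u).ncard ≤ q * q) (hB : g.GainBounded N B) :
    g.GainBounded (N + N) (B + 2 * q) := by
  intro t₁ t₂ h₁₂ h₂ htr c
  obtain ⟨s, h₁s, hs₂, hfirst, hsecond⟩ := g.exists_transferCountBetween_le_of_le_add h₁₂ htr
  set S := g.insertionStepsAbove c (B + q) t₁ t₂
  have hmemS : ∀ t ∈ S, (t₁ ≤ t ∧ t < t₂) ∧ ∃ i i', g.move t = some (c, i, i') ∧ B + q ≤ i' :=
    fun t ht => by simpa [S, insertionStepsAbove] using ht
  have htall : ∀ t ∈ S, q + 1 ≤ (g.board t₁ (g.active t)).ncard ∨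
      q + 1 ≤ (g.board s (g.active t)).ncard := by
    intro t ht
    obtain ⟨⟨h₁t, ht₂⟩, i, i', hmv, hR⟩ := hmemS t ht
    have hbig := g.lt_ncard_board_active_of_move_eq_some
      (g.board_finite hfin (by omega)) (by omega) hmv
    rcases lt_or_ge t s with hts | hst
    · have := hB t₁ t h₁t (by omega)
        ((g.transferCountBetween_mono le_rfl hts.le).trans hfirst) (g.active t)
      omega
    · have := hB s t hst (by omega)
        ((g.transferCountBetween_mono le_rfl ht₂.le).trans hsecond) (g.active t)
      omega
  have hcard : #S * (q + 1) ≤ q * (q + 1) :=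
    (g.card_mul_le_of_sources_tall hfin
      (fun t ht => by obtain ⟨⟨-, ht₂⟩, i, i', hmv, -⟩ := hmemS t ht; exact ⟨by omega, i, i', hmv⟩)
      (h₁₂.trans h₂) (hs₂.trans h₂) htall).trans (hq.trans (by nlinarith))
  have hS : #S ≤ q := Nat.le_of_mul_le_mul_right hcard q.succ_pos
  have hlow := ncard_le_add_ncard_inter_Ici (g.board_finite hfin h₂ c) (B + q)
  have hhigh : _ ≤ _ + #S := g.ncard_board_inter_Ici_le hfin h₁₂ h₂ c (B + q)
  have hstart : (g.board t₁ c ∩ Set.Ici (B + q)).ncard ≤ (g.board t₁ c).ncard :=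
    Set.ncard_le_ncard Set.inter_subset_left (g.board_finite hfin (h₁₂.trans h₂) c)
  omega

lemma gainBounded_two_pow (hfin : ∀ u, (g.board 0 u).Finite) {q : ℕ}
    (hq : 2 * ∑ u, (g.board 0 u).ncard ≤ q * q) (ℓ : ℕ) :
    g.GainBounded (2 ^ ℓ) (1 + 2 * ℓ * q) := by
  induction ℓ with
  | zero => simpa using g.gainBounded_one hfin
  | succ ℓ ih =>
    rw [pow_succ, mul_two, show 1 + 2 * (ℓ + 1) * q = 1 + 2 * ℓ * q + 2 * q by ring]
    exact ih.add_self hfin hq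

end TokenGame

lemma le_ceil_sqrt_mul_self (k : ℕ) : k ≤ ⌈√(k : ℝ)⌉₊ * ⌈√(k : ℝ)⌉₊ := by
  have h := (Real.sqrt_le_iff.1 (Nat.le_ceil √(k : ℝ))).2
  rw [sq] at h
  exact_mod_cast h

/-- Lemma `tganal2` of the paper.  In a token game with `m` tokens
and at most `2^ℓ` transfer steps, each column gains a net of at most
`1 + 2ℓ⌈√(2m)⌉` tokens. -/
theorem tokenGame_net_gain {n : ℕ} (g : TokenGame n) (m ℓ : ℕ)
    (hfin : ∀ u, (g.board 0 u).Finite)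
    (hm : (∑ u : Fin n, (g.board 0 u).ncard) = m)
    (htr : transferCount g ≤ 2 ^ ℓ) (c : Fin n) :
    ((g.board g.len c).ncard : ℤ) - ((g.board 0 c).ncard : ℤ) ≤
      1 + 2 * ℓ * ⌈Real.sqrt (2 * m)⌉ := by
  have hq : 2 * ∑ u, (g.board 0 u).ncard ≤ ⌈√(2 * m : ℝ)⌉₊ * ⌈√(2 * m : ℝ)⌉₊ := by
    simpa [hm] using le_ceil_sqrt_mul_self (2 * m)
  have htr' : transferCountBetween g 0 g.len ≤ 2 ^ ℓ := by
    rwa [transferCountBetween, ← range_eq_Ico]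
  have hgain := g.gainBounded_two_pow hfin hq ℓ 0 g.len (Nat.zero_le _) le_rfl htr' c
  rw [← Int.natCast_ceil_eq_ceil (Real.sqrt_nonneg _)]
  linarith

end AltitudePaper
end

section
/- If G is a graph with n ≥ 1 vertices and average degree d = 2|E(G)|/n, then every edge-ordering of G contains a monotone trail of length at least d; that is, f*(G) ≥ d. -/
/-!
Graham–Kleitman's pedestrian argument: place a pedestrian on every vertex and process the
edges in increasing order; when the edge `ab` comes up, the pedestrians standing at `a` and
`b` swap places along it. Each pedestrian walks a monotone trail, and every edge adds `2` to
the total distance walked, so after all `|E(G)|` edges some pedestrian has walked at least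
`2|E(G)|/n = d`.
-/

namespace AltitudePaper

variable {V : Type*}

/-- A monotone trail in the edge-ordered graph `(G, oe)` (where `oe` is a linear
order on edges): a walk with no repeated edges traversing its edges in increasing
order of the edge ordering. -/
def IsMonotoneTrail (G : SimpleGraph V) (oe : LinearOrder (Sym2 V)) {u v : V}
    (p : G.Walk u v) : Prop :=
  p.IsTrail ∧ List.Chain' (fun e f => oe.lt e f) p.edges

open Finset SimpleGraph

variable {G : SimpleGraph V} {oe : LinearOrder (Sym2 V)}

theorem sum_update_add {M : Type*} [AddCommMonoid M] [Fintype V] [DecidableEq V] (f : V → M)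
    (i : V) (x : M) : ∑ v, Function.update f i x v + f i = ∑ v, f v + x := by
  rw [sum_update_of_mem (mem_univ i), ← add_sum_erase univ f (mem_univ i),
    sdiff_singleton_eq_erase]
  abel

theorem isMonotoneTrail_nil (G : SimpleGraph V) (oe : LinearOrder (Sym2 V)) (v : V) :
    IsMonotoneTrail G oe (Walk.nil : G.Walk v v) :=
  ⟨.nil, List.isChain_nil⟩

theorem IsMonotoneTrail.concat {u v w : V} {p : G.Walk u v} (hp : IsMonotoneTrail G oe p)
    (h : G.Adj v w) (hlt : ∀ e ∈ p.edges, oe.lt e s(v, w)) :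
    IsMonotoneTrail G oe (p.concat h) := by
  -- `Sym2 V` carries its own (subset) partial order, so the order `oe` is passed explicitly.
  have hnotin : s(v, w) ∉ p.edges := fun he => @lt_irrefl _ oe.toPreorder _ (hlt _ he)
  rw [IsMonotoneTrail, Walk.isTrail_def, Walk.edges_concat, List.concat_eq_append]
  refine ⟨hp.1.edges_nodup.append (List.nodup_singleton _) (by simpa using hnotin),
    hp.2.append (List.isChain_singleton _) fun e he f hf => ?_⟩
  rw [List.head?_cons, Option.mem_some_iff] at hf
  exact hf ▸ hlt e (List.mem_of_mem_getLast? he)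

def IsMonotoneTrailIn (G : SimpleGraph V) (oe : LinearOrder (Sym2 V)) (S : Set (Sym2 V))
    {u v : V} (p : G.Walk u v) : Prop :=
  IsMonotoneTrail G oe p ∧ ∀ e ∈ p.edges, e ∈ S

theorem IsMonotoneTrailIn.concat {S : Set (Sym2 V)} {u v w : V} {p : G.Walk u v}
    (hp : IsMonotoneTrailIn G oe S p) (h : G.Adj v w) (hS : ∀ e ∈ S, oe.lt e s(v, w)) :
    IsMonotoneTrailIn G oe (insert s(v, w) S) (p.concat h) := by
  refine ⟨hp.1.concat h fun e he => hS e (hp.2 e he), fun e he => ?_⟩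
  rw [Walk.edges_concat, List.concat_eq_append, List.mem_append, List.mem_singleton] at he
  rcases he with he | rfl
  · exact Set.mem_insert_of_mem _ (hp.2 e he)
  · exact Set.mem_insert _ _

theorem exists_monotoneTrailIn_insert [Fintype V] [DecidableEq V] {S : Set (Sym2 V)} {a b : V}
    (hab : G.Adj a b) (hS : ∀ e ∈ S, oe.lt e s(a, b)) (t : ∀ v, (u : V) × G.Walk u v)
    (ht : ∀ v, IsMonotoneTrailIn G oe S (t v).2) :
    ∃ t' : ∀ v, (u : V) × G.Walk u v, (∀ v, IsMonotoneTrailIn G oe (insert s(a, b) S) (t' v).2) ∧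
      ∑ v, (t' v).2.length = ∑ v, (t v).2.length + 2 := by
  set t' := Function.update (Function.update t a ⟨_, (t b).2.concat hab.symm⟩)
    b ⟨_, (t a).2.concat hab⟩ with ht'
  refine ⟨t', fun v => ?_, ?_⟩
  · rcases eq_or_ne v b with rfl | hvb
    · rw [ht', Function.update_self]
      exact (ht a).concat hab hS
    rcases eq_or_ne v a with rfl | hva
    · rw [ht', Function.update_of_ne hvb, Function.update_self, Sym2.eq_swap]
      exact (ht b).concat hab.symm fun e he => Sym2.eq_swap ▸ hS e he
    · rw [ht', Function.update_of_ne hvb, Function.update_of_ne hva]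
      exact ⟨(ht v).1, fun e he => Set.mem_insert_of_mem _ ((ht v).2 e he)⟩
  · set ℓ : V → ℕ := fun v => (t v).2.length
    have hℓ : (fun v => (t' v).2.length) =
        Function.update (Function.update ℓ a (ℓ b + 1)) b (ℓ a + 1) := by
      funext v
      simp only [t', Function.apply_update (fun v (x : (u : V) × G.Walk u v) => x.2.length),
        Walk.length_concat, ℓ]
    have hb := sum_update_add (Function.update ℓ a (ℓ b + 1)) b (ℓ a + 1)
    have ha := sum_update_add ℓ a (ℓ b + 1)
    rw [Function.update_of_ne hab.ne.symm, ← hℓ] at hb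
    linarith

theorem exists_monotoneTrailIn_sum_length_eq [Fintype V] (oe : LinearOrder (Sym2 V))
    (S : Finset (Sym2 V)) (hS : ∀ e ∈ S, e ∈ G.edgeSet) :
    ∃ t : ∀ v, (u : V) × G.Walk u v, (∀ v, IsMonotoneTrailIn G oe S (t v).2) ∧
      ∑ v, (t v).2.length = 2 * #S := by
  classical
  induction S using @Finset.induction_on_max _ oe with
  | empty => exact ⟨fun v => ⟨v, .nil⟩, fun v => ⟨isMonotoneTrail_nil G oe v, by simp⟩, by simp⟩
  | insert e S hlt ih =>
    induction e using Sym2.ind with | _ a b =>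
    obtain ⟨t, ht, hsum⟩ := ih fun e he => hS e (mem_insert_of_mem he)
    obtain ⟨t', ht', hsum'⟩ := exists_monotoneTrailIn_insert (hS _ (mem_insert_self _ _)) hlt t ht
    refine ⟨t', by simpa only [coe_insert] using ht', ?_⟩
    rw [hsum', hsum, card_insert_of_notMem fun h => @lt_irrefl _ oe.toPreorder _ (hlt _ h)]
    ring

/-- Graham–Kleitman; the pedestrian argument.  If `G` is a graph
with `n ≥ 1` vertices and average degree `d = 2|E(G)|/n`, then every edge-ordering of
`G` contains a monotone trail of length at least `d`; that is, `f*(G) ≥ d`. -/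
theorem monotone_trail_avg_degree {V : Type*} [Fintype V] [Nonempty V]
    (G : SimpleGraph V) (n : ℕ) (hn : Fintype.card V = n) (d : ℝ)
    (hd : d = 2 * G.edgeSet.ncard / n) (oe : LinearOrder (Sym2 V)) :
    ∃ (u v : V) (p : G.Walk u v),
      IsMonotoneTrail G oe p ∧ d ≤ (p.length : ℝ) := by
  classical
  obtain ⟨t, ht, hsum⟩ :=
    exists_monotoneTrailIn_sum_length_eq oe G.edgeFinset fun _ => mem_edgeFinset.1
  have hn0 : (n : ℝ) ≠ 0 := by
    rw [← hn]
    exact_mod_cast Fintype.card_ne_zero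
  have hsum_le : ∑ _v : V, d ≤ ∑ v, ((t v).2.length : ℝ) := by
    rw [sum_const, card_univ, hn, nsmul_eq_mul, hd, mul_div_cancel₀ _ hn0, ← Nat.cast_sum, hsum,
      ← coe_edgeFinset, Set.ncard_coe_finset]
    push_cast
    rfl
  obtain ⟨v, -, hv⟩ := exists_le_of_sum_le univ_nonempty hsum_le
  exact ⟨_, v, (t v).2, (ht v).1, hv⟩

end AltitudePaper
end
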